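/- Let 1 ≤ p < ∞, let {h_α : α ∈ 𝒜_∞} be a Haar-like system on A ∈ Σ⁺ in L_p = L_p(Ω,Σ,μ), let X be a Banach space, let ε > 0, and let (ε_α)_{α ∈ 𝒜_∞} be positive numbers with ∑_α ε_α / ‖h_α‖_p ≤ ε/2 (note ‖h_α‖_p = (2^{−n} μ(A))^{1/p} for α ∈ 𝒜ₙ). If (x_α)_{α ∈ 𝒜_∞} is a family of vectors in X with ‖x_α‖ ≤ ε_α for all α, then there exists a bounded linear operator U from the closed linear span of {h_α : α ∈ 𝒜_∞} in L_p to X such that U h_α = x_α for all α ∈ 𝒜_∞ and ‖U‖ ≤ ε. -/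

import Mathlib

open MeasureTheory ENNReal Set Filter

noncomputable section

variable {Ω : Type*} [MeasurableSpace Ω]

/-- `f ∈ L_p(μ)` is a *sign supported on* `A`: `f = χ_{B₁} - χ_{B₂}` where `B₁, B₂`
form a partition of `A` into two measurable subsets of equal measure. -/
def IsSignOn (μ : Measure Ω) [IsFiniteMeasure μ] (p : ℝ≥0∞) [Fact (1 ≤ p)]
    (f : Lp ℝ p μ) (A : Set Ω) : Prop :=
  ∃ (B₁ B₂ : Set Ω) (h₁ : MeasurableSet B₁) (h₂ : MeasurableSet B₂),
    Disjoint B₁ B₂ ∧ B₁ ∪ B₂ = A ∧ μ B₁ = μ B₂ ∧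
    f = indicatorConstLp p h₁ (measure_ne_top μ B₁) (1 : ℝ) -
        indicatorConstLp p h₂ (measure_ne_top μ B₂) (1 : ℝ)

/-- `T : L_p(μ) → X` is *PP-narrow*: for every measurable `A` of nonzero measure and
every `ε > 0` there is a sign `f` supported on `A` with `‖T f‖ ≤ ε`. -/
def PPNarrow (μ : Measure Ω) [IsFiniteMeasure μ] (p : ℝ≥0∞) [Fact (1 ≤ p)]
    {X : Type*} [NormedAddCommGroup X] [NormedSpace ℝ X]
    (T : Lp ℝ p μ →L[ℝ] X) : Prop :=
  ∀ A : Set Ω, MeasurableSet A → 0 < μ A →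
    ∀ ε : ℝ, 0 < ε → ∃ f : Lp ℝ p μ, IsSignOn μ p f A ∧ ‖T f‖ ≤ ε

/-- A *tree of subsets* on `A`, indexed by finite ±1-tuples (modelled as `List Bool`,
`true ↔ 1`, `false ↔ -1`): `t [] = A` and for every `α` the sets `t (α ++ [true])` and
`t (α ++ [false])` form a partition of `t α` into two measurable subsets of equal measure. -/
structure IsTreeOn (μ : Measure Ω) (A : Set Ω) (t : List Bool → Set Ω) : Prop where
  root : t [] = A
  meas : ∀ α, MeasurableSet (t α)
  disj : ∀ α, Disjoint (t (α ++ [true])) (t (α ++ [false]))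
  union : ∀ α, t (α ++ [true]) ∪ t (α ++ [false]) = t α
  eqmeas : ∀ α, μ (t (α ++ [true])) = μ (t (α ++ [false]))

/-- The *Haar-like system* corresponding to a tree of subsets:
`h_α = χ_{A_{α,1}} - χ_{A_{α,-1}}`, as an element of `L_p(μ)`. -/
def haarFn (μ : Measure Ω) [IsFiniteMeasure μ] (p : ℝ≥0∞) [Fact (1 ≤ p)]
    (t : List Bool → Set Ω) (ht : ∀ α, MeasurableSet (t α)) (α : List Bool) : Lp ℝ p μ :=
  indicatorConstLp p (ht (α ++ [true])) (measure_ne_top μ _) (1 : ℝ) -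
  indicatorConstLp p (ht (α ++ [false])) (measure_ne_top μ _) (1 : ℝ)

/-- Each Haar-like function belongs to the closed linear span of the Haar-like system. -/
theorem haarFn_mem_closedSpan (μ : Measure Ω) [IsFiniteMeasure μ] (p : ℝ≥0∞) [Fact (1 ≤ p)]
    (t : List Bool → Set Ω) (ht : ∀ α, MeasurableSet (t α)) (α : List Bool) :
    haarFn μ p t ht α ∈
      (Submodule.span ℝ (Set.range (haarFn μ p t ht))).topologicalClosure :=
  Submodule.le_topologicalClosure _ (Submodule.subset_span ⟨α, rfl⟩)

/-!
The functionals `φ_β f = μ(A_β)⁻¹ ∫ f h_β`, with `h_β` read in the conjugate space `L_q`, are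
biorthogonal to the Haar-like system. This is because the tree is laminar: for `α ≠ β` either
`h_α` and `h_β` have disjoint supports, or the one with the shorter index is constant on the
support of the other, whose integral vanishes. Hölder gives
`‖φ_β‖ ≤ μ(A_β)⁻¹ ‖h_β‖_q = 1 / ‖h_β‖_p`, so `U = ∑_β φ_β ⊗ x_β` converges absolutely in
operator norm, `‖U‖ ≤ ∑_β ‖x_β‖ / ‖h_β‖_p ≤ ε / 2`, and `U h_α = x_α`.
-/

theorem ContinuousLinearMap.exists_apply_eq_of_biorthogonal
    {𝕜 ι E X : Type*} [NontriviallyNormedField 𝕜]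
    [NormedAddCommGroup E] [NormedSpace 𝕜 E] [NormedAddCommGroup X] [NormedSpace 𝕜 X]
    [CompleteSpace X] (e : ι → E) (φ : ι → StrongDual 𝕜 E) (hφe : ∀ i, φ i (e i) = 1)
    (hφe' : ∀ i j, i ≠ j → φ i (e j) = 0) (x : ι → X)
    (hsum : Summable fun i => ‖φ i‖ * ‖x i‖) :
    ∃ U : E →L[𝕜] X, (∀ i, U (e i) = x i) ∧ ‖U‖ ≤ ∑' i, ‖φ i‖ * ‖x i‖ := by
  have hsum' : Summable fun i => ‖(φ i).smulRight (x i)‖ := by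
    simpa only [ContinuousLinearMap.norm_smulRight_apply] using hsum
  refine ⟨∑' i, (φ i).smulRight (x i), fun j => ?_, ?_⟩
  · have := (ContinuousLinearMap.apply 𝕜 X (e j)).map_tsum hsum'.of_norm
    simp only [ContinuousLinearMap.apply_apply] at this
    rw [this, tsum_eq_single j fun i hij => by simp [hφe' i j hij]]
    simp [hφe j]
  · simpa only [ContinuousLinearMap.norm_smulRight_apply] using norm_tsum_le_tsum_norm hsum'

theorem ContinuousLinearMap.norm_lpPairing_apply_apply_le {α 𝕜 E F G : Type*}
    {m : MeasurableSpace α} {μ : Measure α} {p q : ℝ≥0∞} [NontriviallyNormedField 𝕜]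
    [NormedAddCommGroup E] [NormedAddCommGroup F] [NormedAddCommGroup G]
    [NormedSpace 𝕜 E] [NormedSpace 𝕜 F] [NormedSpace 𝕜 G] [NormedSpace ℝ G]
    [SMulCommClass ℝ 𝕜 G] [CompleteSpace G] [Fact (1 ≤ p)] [Fact (1 ≤ q)] [p.HolderConjugate q]
    (B : E →L[𝕜] F →L[𝕜] G) (f : Lp E p μ) (g : Lp F q μ) :
    ‖B.lpPairing μ p q f g‖ ≤ ‖B‖ * ‖f‖ * ‖g‖ :=
  calc ‖B.lpPairing μ p q f g‖ = ‖L1.integral (B.holder 1 f g)‖ := by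
        simp [lpPairing, ← L1.integral_eq']
    _ ≤ ‖B‖ * ‖f‖ * ‖g‖ := (L1.norm_integral_le _).trans (B.norm_holder_apply_apply_le f g)

/-- This also covers `p = ∞` or `q = ∞`, where `toReal` gives `0` and `0⁻¹ = 0`. -/
theorem ENNReal.HolderConjugate.inv_toReal_add_inv_toReal {p q : ℝ≥0∞} [p.HolderConjugate q] :
    p.toReal⁻¹ + q.toReal⁻¹ = 1 := by
  have h := congrArg ENNReal.toReal (ENNReal.HolderConjugate.inv_add_inv_eq_one p q)
  rwa [ENNReal.toReal_add (ENNReal.inv_ne_top.2 (HolderConjugate.ne_zero p q))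
    (ENNReal.inv_ne_top.2 (HolderConjugate.ne_zero q p)), ENNReal.toReal_inv,
    ENNReal.toReal_inv, ENNReal.toReal_one] at h

namespace IsTreeOn

variable {μ : Measure Ω} {A : Set Ω} {t : List Bool → Set Ω}

theorem child_subset (ht : IsTreeOn μ A t) (α : List Bool) (b : Bool) :
    t (α ++ [b]) ⊆ t α := by
  rw [← ht.union α]
  cases b
  exacts [subset_union_right, subset_union_left]

theorem subset_of_prefix (ht : IsTreeOn μ A t) {α β : List Bool} (h : α <+: β) :
    t β ⊆ t α := by
  obtain ⟨γ, rfl⟩ := h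
  induction γ using List.reverseRecOn with
  | nil => simp
  | append_singleton γ b ih =>
    rw [← List.append_assoc]
    exact (ht.child_subset _ b).trans ih

theorem disjoint_children (ht : IsTreeOn μ A t) (α : List Bool) {b b' : Bool} (h : b ≠ b') :
    Disjoint (t (α ++ [b])) (t (α ++ [b'])) := by
  cases b <;> cases b' <;> first | exact absurd rfl h | exact ht.disj α | exact (ht.disj α).symm

theorem tail (ht : IsTreeOn μ A t) (a : Bool) : IsTreeOn μ (t [a]) (fun α => t (a :: α)) where
  root := rfl
  meas _ := ht.meas _
  disj α := ht.disj (a :: α)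
  union α := ht.union (a :: α)
  eqmeas α := ht.eqmeas (a :: α)

theorem disjoint_of_not_prefix (ht : IsTreeOn μ A t) {α β : List Bool} (h₁ : ¬α <+: β)
    (h₂ : ¬β <+: α) : Disjoint (t α) (t β) := by
  induction α generalizing A t β with
  | nil => exact absurd List.nil_prefix h₁
  | cons a α ih =>
    cases β with
    | nil => exact absurd List.nil_prefix h₂
    | cons b β =>
      by_cases hab : a = b
      · subst hab
        exact ih (ht.tail a) (by simpa using h₁) (by simpa using h₂)
      · exact (ht.disjoint_children [] hab).mono (ht.subset_of_prefix ⟨α, rfl⟩)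
          (ht.subset_of_prefix ⟨β, rfl⟩)

theorem measure_pos (ht : IsTreeOn μ A t) (hA : 0 < μ A) (α : List Bool) : 0 < μ (t α) := by
  induction α using List.reverseRecOn with
  | nil => rwa [ht.root]
  | append_singleton α b ih =>
    have hle : μ (t α) ≤ 2 * μ (t (α ++ [b])) := by
      calc μ (t α) ≤ μ (t (α ++ [true])) + μ (t (α ++ [false])) := by
            rw [← ht.union α]; exact measure_union_le _ _
        _ = 2 * μ (t (α ++ [b])) := by cases b <;> simp [two_mul, ht.eqmeas α]
    exact pos_iff_ne_zero.2 fun h => by simp [h] at hle; exact ih.ne' hle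

end IsTreeOn

def haarFun (t : List Bool → Set Ω) (α : List Bool) : Ω → ℝ :=
  (t (α ++ [true])).indicator 1 - (t (α ++ [false])).indicator 1

section haarFun

variable {μ : Measure Ω} {A : Set Ω} {t : List Bool → Set Ω} {α β : List Bool} {x : Ω}

theorem haarFun_eq_zero_of_notMem (ht : IsTreeOn μ A t) (hx : x ∉ t α) : haarFun t α x = 0 := by
  have h₁ : x ∉ t (α ++ [true]) := fun h => hx (ht.child_subset α true h)
  have h₀ : x ∉ t (α ++ [false]) := fun h => hx (ht.child_subset α false h)
  simp [haarFun, h₁, h₀]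

theorem haarFun_of_mem_child (ht : IsTreeOn μ A t) {b : Bool} (hx : x ∈ t (α ++ [b])) :
    haarFun t α x = bif b then 1 else -1 := by
  cases b
  · have : x ∉ t (α ++ [true]) := fun h => (ht.disj α).notMem_of_mem_right hx h
    simp [haarFun, hx, this]
  · have : x ∉ t (α ++ [false]) := fun h => (ht.disj α).notMem_of_mem_left hx h
    simp [haarFun, hx, this]

theorem abs_haarFun (ht : IsTreeOn μ A t) (α : List Bool) (x : Ω) :
    |haarFun t α x| = (t α).indicator 1 x := by
  by_cases hx : x ∈ t α
  · rw [← ht.union α] at hx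
    rcases hx with hx | hx <;> simp [haarFun_of_mem_child ht hx, ← ht.union α, hx]
  · simp [haarFun_eq_zero_of_notMem ht hx, hx]

theorem haarFun_mul_self (ht : IsTreeOn μ A t) (α : List Bool) (x : Ω) :
    haarFun t α x * haarFun t α x = (t α).indicator 1 x := by
  rw [← abs_mul_abs_self, abs_haarFun ht]
  by_cases hx : x ∈ t α <;> simp [hx]

theorem integral_haarFun_mul_self (ht : IsTreeOn μ A t) (α : List Bool) :
    ∫ x, haarFun t α x * haarFun t α x ∂μ = μ.real (t α) := by
  simp_rw [haarFun_mul_self ht]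
  exact integral_indicator_one (ht.meas α)

variable [IsFiniteMeasure μ]

theorem integral_haarFun (ht : IsTreeOn μ A t) (α : List Bool) : ∫ x, haarFun t α x ∂μ = 0 := by
  have hint : ∀ b, Integrable ((t (α ++ [b])).indicator (1 : Ω → ℝ)) μ := fun b =>
    (integrable_const 1).indicator (ht.meas _)
  rw [haarFun, integral_sub' (hint true) (hint false), integral_indicator_one (ht.meas _),
    integral_indicator_one (ht.meas _), measureReal_def, measureReal_def, ht.eqmeas α, sub_self]

theorem integral_haarFun_mul_of_prefix (ht : IsTreeOn μ A t) (hαβ : α <+: β) (hne : α ≠ β) :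
    ∫ x, haarFun t α x * haarFun t β x ∂μ = 0 := by
  obtain ⟨_ | ⟨b, γ⟩, rfl⟩ := hαβ
  · simp at hne
  have hconst : ∀ x, haarFun t α x * haarFun t (α ++ b :: γ) x
      = (bif b then 1 else -1) * haarFun t (α ++ b :: γ) x := fun x => by
    by_cases hx : x ∈ t (α ++ b :: γ)
    · rw [haarFun_of_mem_child ht (ht.subset_of_prefix (α := α ++ [b]) ⟨γ, by simp⟩ hx)]
    · simp [haarFun_eq_zero_of_notMem ht hx]
  simp_rw [hconst, integral_const_mul, integral_haarFun ht, mul_zero]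

theorem integral_haarFun_mul_of_ne (ht : IsTreeOn μ A t) (hne : α ≠ β) :
    ∫ x, haarFun t α x * haarFun t β x ∂μ = 0 := by
  by_cases hαβ : α <+: β
  · exact integral_haarFun_mul_of_prefix ht hαβ hne
  by_cases hβα : β <+: α
  · simp_rw [mul_comm (haarFun t α _)]
    exact integral_haarFun_mul_of_prefix ht hβα hne.symm
  have hdisj := ht.disjoint_of_not_prefix hαβ hβα
  have hzero : ∀ x, haarFun t α x * haarFun t β x = 0 := fun x => by
    by_cases hx : x ∈ t α
    · rw [haarFun_eq_zero_of_notMem ht (hdisj.notMem_of_mem_left hx), mul_zero]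
    · rw [haarFun_eq_zero_of_notMem ht hx, zero_mul]
  simp [hzero]

end haarFun

section haarFn

variable {μ : Measure Ω} [IsFiniteMeasure μ] {p : ℝ≥0∞} [Fact (1 ≤ p)] {A : Set Ω}
  {t : List Bool → Set Ω}

theorem coeFn_haarFn (ht : ∀ α, MeasurableSet (t α)) (α : List Bool) :
    haarFn μ p t ht α =ᵐ[μ] haarFun t α := by
  filter_upwards [Lp.coeFn_sub (indicatorConstLp p (ht (α ++ [true])) (measure_ne_top μ _) 1)
      (indicatorConstLp p (ht (α ++ [false])) (measure_ne_top μ _) (1 : ℝ)),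
    indicatorConstLp_coeFn (p := p) (hs := ht (α ++ [true])) (hμs := measure_ne_top μ _)
      (c := (1 : ℝ)),
    indicatorConstLp_coeFn (p := p) (hs := ht (α ++ [false])) (hμs := measure_ne_top μ _)
      (c := (1 : ℝ))] with x hsub h₁ h₀
  rw [haarFn, hsub, Pi.sub_apply, h₁, h₀]
  rfl

theorem norm_haarFn (ht : IsTreeOn μ A t) (hA : 0 < μ A) (α : List Bool) :
    ‖haarFn μ p t ht.meas α‖ = μ.real (t α) ^ (1 / p.toReal) := by
  have hnorm : ∀ᵐ x ∂μ, ‖haarFn μ p t ht.meas α x‖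
      = ‖indicatorConstLp p (ht.meas α) (measure_ne_top μ _) (1 : ℝ) x‖ := by
    filter_upwards [coeFn_haarFn (p := p) ht.meas α, indicatorConstLp_coeFn (p := p)
      (hs := ht.meas α) (hμs := measure_ne_top μ _) (c := (1 : ℝ))] with x h h'
    rw [h, h', Real.norm_eq_abs, abs_haarFun ht]
    by_cases hx : x ∈ t α <;> simp [hx]
  rw [Lp.norm_def, eLpNorm_congr_norm_ae hnorm, ← Lp.norm_def,
    norm_indicatorConstLp' (zero_lt_one.trans_le Fact.out).ne' (ht.measure_pos hA α).ne',
    norm_one, one_mul]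

end haarFn

section haarCoord

variable (μ : Measure Ω) [IsFiniteMeasure μ] (p q : ℝ≥0∞) [Fact (1 ≤ p)] [Fact (1 ≤ q)]
  [p.HolderConjugate q]

def haarCoord (t : List Bool → Set Ω) (ht : ∀ α, MeasurableSet (t α)) (β : List Bool) :
    StrongDual ℝ (Lp ℝ p μ) :=
  (μ.real (t β))⁻¹ • ((ContinuousLinearMap.mul ℝ ℝ).lpPairing μ p q).flip (haarFn μ q t ht β)

variable {μ p q} {A : Set Ω} {t : List Bool → Set Ω}

theorem haarCoord_haarFn (ht : IsTreeOn μ A t) (β α : List Bool) :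
    haarCoord μ p q t ht.meas β (haarFn μ p t ht.meas α)
      = (μ.real (t β))⁻¹ * ∫ x, haarFun t α x * haarFun t β x ∂μ := by
  simp only [haarCoord, FunLike.coe_smul, Pi.smul_apply, ContinuousLinearMap.flip_apply,
    ContinuousLinearMap.lpPairing_eq_integral, ContinuousLinearMap.mul_apply', smul_eq_mul]
  congr 1
  refine integral_congr_ae ?_
  filter_upwards [coeFn_haarFn (p := p) ht.meas α, coeFn_haarFn (p := q) ht.meas β]
    with x hα hβ
  rw [hα, hβ]

theorem haarCoord_haarFn_self (ht : IsTreeOn μ A t) (hA : 0 < μ A) (α : List Bool) :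
    haarCoord μ p q t ht.meas α (haarFn μ p t ht.meas α) = 1 := by
  rw [haarCoord_haarFn ht, integral_haarFun_mul_self ht]
  exact inv_mul_cancel₀ (ENNReal.toReal_pos (ht.measure_pos hA α).ne' (measure_ne_top μ _)).ne'

theorem haarCoord_haarFn_of_ne (ht : IsTreeOn μ A t) {β α : List Bool} (h : β ≠ α) :
    haarCoord μ p q t ht.meas β (haarFn μ p t ht.meas α) = 0 := by
  rw [haarCoord_haarFn ht, integral_haarFun_mul_of_ne ht h.symm, mul_zero]

theorem norm_haarCoord_le (ht : IsTreeOn μ A t) (hA : 0 < μ A) (β : List Bool) :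
    ‖haarCoord μ p q t ht.meas β‖ ≤ ‖haarFn μ p t ht.meas β‖⁻¹ := by
  have hc : 0 < μ.real (t β) :=
    ENNReal.toReal_pos (ht.measure_pos hA β).ne' (measure_ne_top μ _)
  have hpairing : ‖((ContinuousLinearMap.mul ℝ ℝ).lpPairing μ p q).flip (haarFn μ q t ht.meas β)‖
      ≤ ‖haarFn μ q t ht.meas β‖ := by
    refine ContinuousLinearMap.opNorm_le_bound _ (norm_nonneg _) fun f => ?_
    calc _ ≤ ‖ContinuousLinearMap.mul ℝ ℝ‖ * ‖f‖ * ‖haarFn μ q t ht.meas β‖ :=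
          ContinuousLinearMap.norm_lpPairing_apply_apply_le _ _ _
      _ ≤ 1 * ‖f‖ * ‖haarFn μ q t ht.meas β‖ := by
          gcongr
          exact ContinuousLinearMap.opNorm_mul_le ℝ ℝ
      _ = ‖haarFn μ q t ht.meas β‖ * ‖f‖ := by ring
  have hexp : μ.real (t β) ^ (1 / q.toReal) * μ.real (t β) ^ (1 / p.toReal) = μ.real (t β) := by
    rw [← Real.rpow_add hc, one_div, one_div, add_comm,
      ENNReal.HolderConjugate.inv_toReal_add_inv_toReal, Real.rpow_one]
  calc ‖haarCoord μ p q t ht.meas β‖ ≤ (μ.real (t β))⁻¹ * ‖haarFn μ q t ht.meas β‖ := by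
        rw [haarCoord, norm_smul, Real.norm_of_nonneg (inv_nonneg.2 hc.le)]
        gcongr
    _ = ‖haarFn μ p t ht.meas β‖⁻¹ := by
        rw [norm_haarFn ht hA, norm_haarFn ht hA]
        refine eq_inv_of_mul_eq_one_left ?_
        rw [mul_assoc, hexp, inv_mul_cancel₀ hc.ne']

end haarCoord

theorem extend_haar_to_small_operator_general
    (μ : Measure Ω) [IsProbabilityMeasure μ]
    (p : ℝ≥0∞) [Fact (1 ≤ p)]
    {X : Type*} [NormedAddCommGroup X] [NormedSpace ℝ X] [CompleteSpace X]
    (A : Set Ω) (hA0 : 0 < μ A)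
    (t : List Bool → Set Ω) (ht : IsTreeOn μ A t)
    (ε : ℝ) (hε : 0 < ε) (εa : List Bool → ℝ)
    (hsummable : Summable fun α : List Bool => εa α / ‖haarFn μ p t ht.meas α‖)
    (hsum : (∑' α : List Bool, εa α / ‖haarFn μ p t ht.meas α‖) ≤ ε / 2)
    (x : List Bool → X) (hx : ∀ α, ‖x α‖ ≤ εa α) :
    ∃ U : ↥((Submodule.span ℝ
        (Set.range (haarFn μ p t ht.meas))).topologicalClosure) →L[ℝ] X,
      (∀ α : List Bool,
        U ⟨haarFn μ p t ht.meas α, haarFn_mem_closedSpan μ p t ht.meas α⟩ = x α) ∧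
      ‖U‖ ≤ ε := by
  have : Fact (1 ≤ p.conjExponent) := ⟨ENNReal.HolderConjugate.one_le _ p⟩
  set φ := haarCoord μ p p.conjExponent t ht.meas
  have hbound : ∀ α, ‖φ α‖ * ‖x α‖ ≤ εa α / ‖haarFn μ p t ht.meas α‖ := fun α => by
    rw [div_eq_inv_mul]
    exact mul_le_mul (norm_haarCoord_le ht hA0 α) (hx α) (norm_nonneg _)
      (inv_nonneg.2 (norm_nonneg _))
  have hsummable' : Summable fun α => ‖φ α‖ * ‖x α‖ :=
    hsummable.of_nonneg_of_le (fun _ => by positivity) hbound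
  obtain ⟨U, hU, hUnorm⟩ := ContinuousLinearMap.exists_apply_eq_of_biorthogonal _ φ
    (haarCoord_haarFn_self ht hA0) (fun _ _ => haarCoord_haarFn_of_ne ht) x hsummable'
  refine ⟨U ∘L Submodule.subtypeL _, hU, ?_⟩
  calc ‖U ∘L Submodule.subtypeL _‖ ≤ ‖U‖ * ‖Submodule.subtypeL _‖ := U.opNorm_comp_le _
    _ ≤ ‖U‖ := mul_le_of_le_one_right (norm_nonneg _) (Submodule.norm_subtypeL_le _)
    _ ≤ ∑' α, εa α / ‖haarFn μ p t ht.meas α‖ :=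
      hUnorm.trans (hsummable'.tsum_le_tsum hbound hsummable)
    _ ≤ ε := by linarith

/-- Remark 2.2(b). Let `(h_α)` be a Haar-like system on `A` in
`L_p(μ)`, `ε > 0`, and `(ε_α)` positive numbers with `∑_α ε_α / ‖h_α‖ ≤ ε/2`. If
`(x_α)` are vectors in a Banach space `X` with `‖x_α‖ ≤ ε_α`, then `h_α ↦ x_α` extends
to a bounded linear operator of norm `≤ ε` on the closed linear span of `(h_α)`. -/
theorem extend_haar_to_small_operator
    (μ : Measure Ω) [IsProbabilityMeasure μ] [NullSingletonClass μ]
    (p : ℝ≥0∞) [Fact (1 ≤ p)] (hp : p ≠ ∞)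
    {X : Type*} [NormedAddCommGroup X] [NormedSpace ℝ X] [CompleteSpace X]
    (A : Set Ω) (hA : MeasurableSet A) (hA0 : 0 < μ A)
    (t : List Bool → Set Ω) (ht : IsTreeOn μ A t)
    (ε : ℝ) (hε : 0 < ε) (εa : List Bool → ℝ) (hεa : ∀ α, 0 < εa α)
    (hsummable : Summable fun α : List Bool => εa α / ‖haarFn μ p t ht.meas α‖)
    (hsum : (∑' α : List Bool, εa α / ‖haarFn μ p t ht.meas α‖) ≤ ε / 2)
    (x : List Bool → X) (hx : ∀ α, ‖x α‖ ≤ εa α) :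
    ∃ U : ↥((Submodule.span ℝ
        (Set.range (haarFn μ p t ht.meas))).topologicalClosure) →L[ℝ] X,
      (∀ α : List Bool,
        U ⟨haarFn μ p t ht.meas α, haarFn_mem_closedSpan μ p t ht.meas α⟩ = x α) ∧
      ‖U‖ ≤ ε :=
  extend_haar_to_small_operator_general μ p A hA0 t ht ε hε εa hsummable hsum x hx
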